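/- Let ν be a true λ-invariant measure of the subcritical BGW process (not killed at 0). If 0 < λ < 1, then ν(j) = 0 for all j ∈ ℕ. If λ = 1, then ν is a nonnegative multiple of the Dirac mass at 0, i.e. ν(j) = 0 for all j ≥ 1. -/
import Mathlib


open MeasureTheory Real Set

/-- `convPow q i j` is the `i`-fold convolution power of the offspring distribution `q`
evaluated at `j`, i.e. the transition matrix `P₀(i,j)` of the BGW process. -/
noncomputable def convPow (q : ℕ → ℝ) : ℕ → ℕ → ℝ
  | 0, j => if j = 0 then 1 else 0
  | i + 1, j => ∑ k ∈ Finset.range (j + 1), convPow q i (j - k) * q k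

/-- `ν` is a true `lam`-invariant measure on `ℕ` of the (non-killed) BGW process. -/
def IsTrueInvMeasure (q : ℕ → ℝ) (lam : ℝ) (ν : ℕ → ℝ) : Prop :=
  (∀ n, 0 ≤ ν n) ∧
  ∀ j : ℕ,
    Summable (fun i => ν i * convPow q i j) ∧
    ∑' i, ν i * convPow q i j = lam * ν j

lemma convPow_nonneg (q : ℕ → ℝ) (hq0 : ∀ k, 0 ≤ q k) : ∀ i j, 0 ≤ convPow q i j := by
  intro i
  induction i with
  | zero => intro j; simp only [convPow]; split <;> norm_num
  | succ i ih =>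
    intro j
    simp only [convPow]
    exact Finset.sum_nonneg fun k _ => mul_nonneg (ih _) (hq0 k)

lemma convPow_at_zero (q : ℕ → ℝ) : ∀ i, convPow q i 0 = q 0 ^ i := by
  intro i
  induction i with
  | zero => simp [convPow]
  | succ i ih => simp [convPow, ih, pow_succ]

lemma one_sub_pow_le_aux {s : ℝ} (hs0 : 0 ≤ s) (hs1 : s ≤ 1) :
    ∀ k : ℕ, 1 - s ^ k ≤ (k : ℝ) * (1 - s) := by
  intro k
  induction k with
  | zero => simp
  | succ k ih =>
    have hpow : s ^ k ≤ 1 := pow_le_one₀ hs0 hs1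
    have : 1 - s ^ (k + 1) = (1 - s) + s * (1 - s ^ k) := by ring
    rw [this]
    have h1 : s * (1 - s ^ k) ≤ 1 * (1 - s ^ k) :=
      mul_le_mul_of_nonneg_right hs1 (by linarith)
    push_cast
    nlinarith

/-- Generating function of the `i`-th convolution power. -/
lemma convPow_hasSum (q : ℕ → ℝ) (hq0 : ∀ k, 0 ≤ q k) {s t : ℝ} (hs0 : 0 ≤ s)
    (ht : HasSum (fun k => q k * s ^ k) t) :
    ∀ i, HasSum (fun j => convPow q i j * s ^ j) (t ^ i) := by
  intro i
  induction i with
  | zero =>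
    have : (fun j => convPow q 0 j * s ^ j) = fun j => if j = 0 then (1 : ℝ) else 0 := by
      funext j
      simp only [convPow]
      split <;> simp_all
    rw [this, pow_zero]
    exact hasSum_ite_eq 0 1
  | succ i ih =>
    have hf_nonneg : ∀ k, 0 ≤ q k * s ^ k := fun k => mul_nonneg (hq0 k) (pow_nonneg hs0 k)
    have hg_nonneg : ∀ j, 0 ≤ convPow q i j * s ^ j :=
      fun j => mul_nonneg (convPow_nonneg q hq0 i j) (pow_nonneg hs0 j)
    have hfn : Summable fun k => ‖q k * s ^ k‖ :=
      ht.summable.congr fun k => (Real.norm_of_nonneg (hf_nonneg k)).symm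
    have hgn : Summable fun j => ‖convPow q i j * s ^ j‖ :=
      ih.summable.congr fun j => (Real.norm_of_nonneg (hg_nonneg j)).symm
    have key := hasSum_sum_range_mul_of_summable_norm hfn hgn
    rw [ht.tsum_eq, ih.tsum_eq] at key
    have heq : (fun n => ∑ k ∈ Finset.range (n + 1),
        (q k * s ^ k) * (convPow q i (n - k) * s ^ (n - k)))
        = fun n => convPow q (i + 1) n * s ^ n := by
      funext n
      simp only [convPow]
      rw [Finset.sum_mul]
      apply Finset.sum_congr rfl
      intro k hk
      have hk' : k ≤ n := Nat.lt_succ_iff.mp (Finset.mem_range.mp hk)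
      have : s ^ k * s ^ (n - k) = s ^ n := by
        rw [← pow_add, Nat.add_sub_cancel' hk']
      linear_combination (convPow q i (n - k) * q k) * this
    rw [heq] at key
    have : t * t ^ i = t ^ (i + 1) := (pow_succ' t i).symm
    rwa [this] at key

theorem true_invariant_measures_small_eigenvalue
    (q : ℕ → ℝ) (hq0 : ∀ k, 0 ≤ q k) (hq1 : HasSum q 1)
    (m : ℝ) (hm : HasSum (fun k : ℕ => (k : ℝ) * q k) m) (hm0 : 0 < m) (hm1 : m < 1)
    (lam : ℝ) (hlam : 0 < lam)
    (ν : ℕ → ℝ) (hν : IsTrueInvMeasure q lam ν) :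
    (lam < 1 → ∀ j : ℕ, ν j = 0) ∧
    (lam = 1 → ∀ j : ℕ, 1 ≤ j → ν j = 0) := by
  obtain ⟨hν0, hνinv⟩ := hν
  -- q 0 ≤ 1
  have hq0le1 : q 0 ≤ 1 := le_hasSum hq1 0 fun k _ => hq0 k
  -- HasSum of q without the 0 term
  have hrest : HasSum (fun k => q k - if k = 0 then q 0 else 0) (1 - q 0) :=
    hq1.sub (hasSum_ite_eq 0 (q 0))
  -- 1 - q 0 ≤ m
  have h1q0m : 1 - q 0 ≤ m := by
    refine hasSum_le (fun k => ?_) hrest hm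
    cases k with
    | zero => simp
    | succ k =>
      have : (1 : ℝ) ≤ (k + 1 : ℕ) := by exact_mod_cast Nat.one_le_iff_ne_zero.mpr (by simp)
      simp only [Nat.succ_ne_zero, if_false]
      nlinarith [hq0 (k + 1)]
  have hq0pos : 0 < q 0 := by linarith
  -- q 0 < 1
  have hq0lt1 : q 0 < 1 := by
    rcases lt_or_eq_of_le hq0le1 with h | h
    · exact h
    · exfalso
      -- all other q k are 0, so m ≤ 0
      have hz : ∀ k : ℕ, (k : ℝ) * q k ≤ 0 := by
        intro k
        cases k with
        | zero => simp
        | succ k =>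
          have hle : q (k + 1) - (if (k + 1 : ℕ) = 0 then q 0 else 0) ≤ 1 - q 0 :=
            le_hasSum hrest (k + 1) fun j _ => by
              split <;> simp_all [hq0 j, sub_nonneg]
          simp only [Nat.succ_ne_zero, if_false, sub_zero] at hle
          rw [← h] at hle
          have : q (k + 1) = 0 := le_antisymm (by linarith) (hq0 (k + 1))
          simp [this]
      have : m ≤ 0 := hasSum_le hz hm hasSum_zero
      linarith
  -- the generating function value t = g(q 0)
  have htsum : Summable fun k => q k * q 0 ^ k := by
    refine Summable.of_nonneg_of_le (fun k => mul_nonneg (hq0 k) (pow_nonneg hq0pos.le k))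
      (fun k => ?_) hq1.summable
    nlinarith [pow_le_one₀ hq0pos.le hq0le1 (n := k), hq0 k]
  set t : ℝ := ∑' k, q k * q 0 ^ k with ht_def
  have ht : HasSum (fun k => q k * q 0 ^ k) t := htsum.hasSum
  -- q 0 < t
  have hq0t : q 0 < t := by
    have h1 : HasSum (fun k => q k - q k * q 0 ^ k) (1 - t) := hq1.sub ht
    have h2 : HasSum (fun k : ℕ => (k : ℝ) * q k * (1 - q 0)) (m * (1 - q 0)) :=
      hm.mul_right (1 - q 0)
    have h3 : 1 - t ≤ m * (1 - q 0) := by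
      refine hasSum_le (fun k => ?_) h1 h2
      have := one_sub_pow_le_aux hq0pos.le hq0le1 k
      nlinarith [hq0 k]
    nlinarith
  -- summability of ν i * q 0 ^ i
  have hVq0sum : Summable fun i => ν i * q 0 ^ i :=
    (hνinv 0).1.congr fun i => by rw [convPow_at_zero]
  set Vq0 : ℝ := ∑' i, ν i * q 0 ^ i with hVq0_def
  -- the row generating functions
  have hrow : ∀ i, HasSum (fun j => convPow q i j * q 0 ^ j) (t ^ i) :=
    convPow_hasSum q hq0 hq0pos.le ht
  -- Tonelli / Fubini for the double sum
  set G : ℕ × ℕ → ℝ := fun p => ν p.2 * convPow q p.2 p.1 * q 0 ^ p.1 with hG_def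
  have hGnonneg : 0 ≤ G := fun p =>
    mul_nonneg (mul_nonneg (hν0 p.2) (convPow_nonneg q hq0 p.2 p.1)) (pow_nonneg hq0pos.le p.1)
  have hGsum : Summable G := by
    rw [summable_prod_of_nonneg hGnonneg]
    constructor
    · intro j
      exact ((hνinv j).1.mul_right (q 0 ^ j)).congr fun i => by simp [hG_def]
    · have : ∀ j, (∑' i, G (j, i)) = lam * ν j * q 0 ^ j := by
        intro j
        simp only [hG_def]
        rw [tsum_mul_right, (hνinv j).2]
      refine Summable.congr ?_ fun j => (this j).symm
      exact (hVq0sum.mul_left lam).congr fun j => by ring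
  -- the swapped summable function F (i,j)
  have hFsum : Summable fun p : ℕ × ℕ => ν p.1 * convPow q p.1 p.2 * q 0 ^ p.2 :=
    hGsum.prod_symm.congr fun p => rfl
  have hFnonneg : 0 ≤ fun p : ℕ × ℕ => ν p.1 * convPow q p.1 p.2 * q 0 ^ p.2 := fun p =>
    mul_nonneg (mul_nonneg (hν0 p.1) (convPow_nonneg q hq0 p.1 p.2)) (pow_nonneg hq0pos.le p.2)
  have hfiber : ∀ i, (∑' j, ν i * convPow q i j * q 0 ^ j) = ν i * t ^ i := by
    intro i
    have := ((hrow i).mul_left (ν i)).tsum_eq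
    rw [← this]
    apply tsum_congr
    intro j; ring
  -- summability of ν i * t ^ i
  have hVtsum : Summable fun i => ν i * t ^ i := by
    have h := (summable_prod_of_nonneg hFnonneg).mp hFsum
    exact h.2.congr fun i => hfiber i
  set Vt : ℝ := ∑' i, ν i * t ^ i with hVt_def
  -- Vt = lam * Vq0
  have hVt_eq : Vt = lam * Vq0 := by
    have hside1 : (∑' p : ℕ × ℕ, ν p.1 * convPow q p.1 p.2 * q 0 ^ p.2) = Vt := by
      rw [Summable.tsum_prod hFsum]
      exact tsum_congr fun i => hfiber i
    have hside2 : (∑' p : ℕ × ℕ, ν p.1 * convPow q p.1 p.2 * q 0 ^ p.2) = lam * Vq0 := by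
      rw [← Equiv.tsum_eq (Equiv.prodComm ℕ ℕ)
        (fun p : ℕ × ℕ => ν p.1 * convPow q p.1 p.2 * q 0 ^ p.2)]
      have : (∑' p : ℕ × ℕ, ν p.2 * convPow q p.2 p.1 * q 0 ^ p.1) = lam * Vq0 := by
        rw [Summable.tsum_prod hGsum]
        have h1 : ∀ j, (∑' i, ν i * convPow q i j * q 0 ^ j) = lam * ν j * q 0 ^ j := by
          intro j
          rw [tsum_mul_right, (hνinv j).2]
        calc (∑' (j) (i), ν i * convPow q i j * q 0 ^ j)
            = ∑' j, lam * ν j * q 0 ^ j := tsum_congr h1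
          _ = lam * Vq0 := by
              rw [hVq0_def, ← tsum_mul_left]
              exact tsum_congr fun j => by ring
      exact this
    rw [← hside1, hside2]
  -- Vq0 ≤ Vt
  have hterm_le : ∀ i, ν i * q 0 ^ i ≤ ν i * t ^ i := fun i =>
    mul_le_mul_of_nonneg_left (pow_le_pow_left₀ hq0pos.le hq0t.le i) (hν0 i)
  have hVq0_le : Vq0 ≤ Vt := Summable.tsum_le_tsum hterm_le hVq0sum hVtsum
  have hVq0_nonneg : 0 ≤ Vq0 :=
    tsum_nonneg fun i => mul_nonneg (hν0 i) (pow_nonneg hq0pos.le i)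
  constructor
  · -- case lam < 1
    intro hlam1 j
    have hVq0_zero : Vq0 = 0 := by
      have : Vq0 ≤ lam * Vq0 := by rw [← hVt_eq]; exact hVq0_le
      nlinarith
    have hterm : ν j * q 0 ^ j ≤ Vq0 :=
      Summable.le_tsum hVq0sum j fun i _ => mul_nonneg (hν0 i) (pow_nonneg hq0pos.le i)
    rw [hVq0_zero] at hterm
    have hterm0 : ν j * q 0 ^ j = 0 :=
      le_antisymm hterm (mul_nonneg (hν0 j) (pow_nonneg hq0pos.le j))
    have : (0:ℝ) < q 0 ^ j := pow_pos hq0pos j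
    rcases mul_eq_zero.mp hterm0 with h | h
    · exact h
    · linarith
  · -- case lam = 1
    intro hlam1 j hj
    by_contra hne
    have hνjpos : 0 < ν j := lt_of_le_of_ne (hν0 j) (Ne.symm hne)
    have hstrict : ν j * q 0 ^ j < ν j * t ^ j := by
      have : q 0 ^ j < t ^ j :=
        pow_lt_pow_left₀ hq0t hq0pos.le (Nat.one_le_iff_ne_zero.mp hj)
      nlinarith
    have : Vq0 < Vt :=
      Summable.tsum_lt_tsum hterm_le hstrict hVq0sum hVtsum
    rw [hVt_eq, hlam1, one_mul] at this
    exact lt_irrefl _ this
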